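/- Let λ > 0 and let ν be a nontrivial λ-invariant measure of the subcritical BGW process killed at 0. Then ν is a finite measure (i.e. ∑_{n≥1} ν(n) < ∞) if and only if λ < 1. -/

import Mathlib

open MeasureTheory Real Set

/-- `convPow q i j` is the `i`-fold convolution power of the offspring distribution `q`
evaluated at `j`, i.e. the transition matrix `P₀(i,j)` of the BGW process. -/
noncomputable def convPow (q : ℕ → ℝ) : ℕ → ℕ → ℝ
  | 0, j => if j = 0 then 1 else 0
  | i + 1, j => ∑ k ∈ Finset.range (j + 1), convPow q i (j - k) * q k

/-- `ν` is a `lam`-invariant measure on `ℕ* = {1,2,…}` of the BGW process killed at 0. -/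
def IsInvMeasure (q : ℕ → ℝ) (lam : ℝ) (ν : ℕ → ℝ) : Prop :=
  (∀ n, 0 ≤ ν n) ∧ ν 0 = 0 ∧
  ∀ j : ℕ, 1 ≤ j →
    Summable (fun i => ν i * convPow q i j) ∧
    ∑' i, ν i * convPow q i j = lam * ν j

/-!
Write `F(s) = ∑ q_k s^k` and `V(s) = ∑ ν_i s^i`. The generating function of `P₀(i, ·)` is `F(s)^i`,
so summing the invariance equations against `s^j` (Tonelli) gives `V(F(s)) = λ V(s) + V(q₀)`.
Here `V(q₀)` is finite and positive: `q₀ > 0` because `m < 1`, and some `q_j > 0` with `j ≥ 1`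
because `m > 0`. If `ν` is finite, `s = 1` gives `V(1) = λ V(1) + V(q₀)`, so `λ < 1`. Conversely,
if `λ < 1`, the bound `V ≤ V(q₀) / (1 - λ)` propagates along the iterates `Fⁿ(q₀)`, which tend
to `1` since `1 - F(s) ≤ m (1 - s)`; letting `n → ∞` bounds every partial sum of `ν`.
-/

open Filter Topology

lemma convPow_nonneg {q : ℕ → ℝ} (hq : ∀ k, 0 ≤ q k) (i j : ℕ) : 0 ≤ convPow q i j := by
  induction i generalizing j with
  | zero => unfold convPow; split_ifs <;> norm_num
  | succ i ih => exact Finset.sum_nonneg fun k _ => mul_nonneg (ih _) (hq k)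

lemma convPow_apply_zero (q : ℕ → ℝ) (i : ℕ) : convPow q i 0 = q 0 ^ i := by
  induction i with
  | zero => rfl
  | succ i ih => simp [convPow, ih, pow_succ]

lemma pow_mul_le_convPow_succ {q : ℕ → ℝ} (hq : ∀ k, 0 ≤ q k) (i j : ℕ) :
    q 0 ^ i * q j ≤ convPow q (i + 1) j := by
  have hj : j ∈ Finset.range (j + 1) := Finset.self_mem_range_succ j
  calc q 0 ^ i * q j = convPow q i (j - j) * q j := by rw [Nat.sub_self, convPow_apply_zero]
    _ ≤ convPow q (i + 1) j :=
      Finset.single_le_sum (f := fun k => convPow q i (j - k) * q k)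
        (fun k _ => mul_nonneg (convPow_nonneg hq _ _) (hq k)) hj

lemma hasSum_of_hasSum_colSums_of_nonneg {α β : Type*} {f : α → β → ℝ} (hf : ∀ i j, 0 ≤ f i j)
    {r : α → ℝ} {c : β → ℝ} {a : ℝ} (hrow : ∀ i, HasSum (f i) (r i))
    (hcol : ∀ j, HasSum (fun i => f i j) (c j)) (hc : HasSum c a) : HasSum r a := by
  set g : β × α → ℝ := fun p => f p.2 p.1
  have hg : Summable g := by
    refine (summable_prod_of_nonneg fun p => hf p.2 p.1).mpr ⟨fun j => (hcol j).summable, ?_⟩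
    simpa only [g, fun j => (hcol j).tsum_eq] using hc.summable
  have hga : HasSum g a := by
    rw [hc.unique (hg.hasSum.prod_fiberwise hcol)]
    exact hg.hasSum
  exact ((Equiv.prodComm α β).hasSum_iff.mpr hga).prod_fiberwise hrow

noncomputable def genFun (a : ℕ → ℝ) (s : ℝ) : ℝ := ∑' n, a n * s ^ n

section genFun

variable {a : ℕ → ℝ} {s : ℝ}

lemma summable_mul_pow_of_le_one (ha : ∀ n, 0 ≤ a n) (hsum : Summable a) (hs0 : 0 ≤ s)
    (hs1 : s ≤ 1) : Summable fun n => a n * s ^ n :=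
  hsum.of_nonneg_of_le (fun n => mul_nonneg (ha n) (pow_nonneg hs0 n))
    fun n => mul_le_of_le_one_right (ha n) (pow_le_one₀ hs0 hs1)

lemma genFun_nonneg (ha : ∀ n, 0 ≤ a n) (hs0 : 0 ≤ s) : 0 ≤ genFun a s :=
  tsum_nonneg fun n => mul_nonneg (ha n) (pow_nonneg hs0 n)

lemma genFun_one (a : ℕ → ℝ) : genFun a 1 = ∑' n, a n := by simp [genFun]

lemma genFun_le_of_le_one (ha : ∀ n, 0 ≤ a n) (hsum : Summable a) (hs0 : 0 ≤ s) (hs1 : s ≤ 1) :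
    genFun a s ≤ ∑' n, a n :=
  (summable_mul_pow_of_le_one ha hsum hs0 hs1).tsum_le_tsum
    (fun n => mul_le_of_le_one_right (ha n) (pow_le_one₀ hs0 hs1)) hsum

lemma hasSum_convPow_mul_pow {q : ℕ → ℝ} (hq : ∀ k, 0 ≤ q k) (hs0 : 0 ≤ s)
    (hqs : Summable fun k => q k * s ^ k) (i : ℕ) :
    HasSum (fun j => convPow q i j * s ^ j) (genFun q s ^ i) := by
  induction i with
  | zero =>
    convert hasSum_ite_eq 0 (1 : ℝ) using 1
    · ext j
      by_cases hj : j = 0 <;> simp [convPow, hj]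
    · exact pow_zero _
  | succ i ih =>
    have hnorm : ∀ {b : ℕ → ℝ}, (∀ n, 0 ≤ b n) → Summable (fun n => b n * s ^ n) →
        Summable fun n => ‖b n * s ^ n‖ := fun hb h => by
      simpa only [Real.norm_of_nonneg (mul_nonneg (hb _) (pow_nonneg hs0 _))] using h
    have hprod := hasSum_sum_range_mul_of_summable_norm (hnorm hq hqs)
      (hnorm (convPow_nonneg hq i) ih.summable)
    rw [ih.tsum_eq, ← genFun, ← pow_succ'] at hprod
    refine (funext fun n => ?_ : _ = fun n => convPow q (i + 1) n * s ^ n) ▸ hprod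
    rw [convPow.eq_2, Finset.sum_mul]
    refine Finset.sum_congr rfl fun k hk => ?_
    rw [← Nat.add_sub_cancel' (Finset.mem_range_succ_iff.mp hk), pow_add, Nat.add_sub_cancel_left]
    ring

end genFun

section Offspring

variable {q : ℕ → ℝ} {m : ℝ}

lemma zero_lt_apply_zero_of_mean_lt_one (hq : ∀ k, 0 ≤ q k) (hq1 : HasSum q 1)
    (hm : HasSum (fun k : ℕ => (k : ℝ) * q k) m) (hm1 : m < 1) : 0 < q 0 := by
  have hle : ∀ k : ℕ, q k ≤ k * q k + if k = 0 then q 0 else 0 := by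
    rintro (_ | k)
    · simp
    · simpa using le_mul_of_one_le_left (hq (k + 1)) (by simp : (1 : ℝ) ≤ (k + 1 : ℕ))
  have := hasSum_le hle hq1 (hm.add (hasSum_ite_eq 0 (q 0)))
  linarith

lemma exists_pos_of_mean_pos (hm : HasSum (fun k : ℕ => (k : ℝ) * q k) m) (hm0 : 0 < m) :
    ∃ j, 1 ≤ j ∧ 0 < q j := by
  by_contra! hq
  have hle : ∀ k : ℕ, (k : ℝ) * q k ≤ 0 := by
    rintro (_ | k)
    · simp
    · exact mul_nonpos_of_nonneg_of_nonpos k.succ.cast_nonneg (hq _ k.succ_pos)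
  linarith [hasSum_le hle hm hasSum_zero]

lemma one_sub_genFun_le (hq : ∀ k, 0 ≤ q k) (hq1 : HasSum q 1)
    (hm : HasSum (fun k : ℕ => (k : ℝ) * q k) m) {s : ℝ} (hs0 : 0 ≤ s) (hs1 : s ≤ 1) :
    1 - genFun q s ≤ m * (1 - s) := by
  have hle : ∀ k : ℕ, q k - q k * s ^ k ≤ k * q k * (1 - s) := fun k => by
    have := one_add_mul_sub_le_pow (by linarith : (-1 : ℝ) ≤ s) k
    nlinarith [hq k]
  exact hasSum_le hle
    (hq1.sub (summable_mul_pow_of_le_one hq hq1.summable hs0 hs1).hasSum) (hm.mul_right _)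

lemma mapsTo_genFun_Icc (hq : ∀ k, 0 ≤ q k) (hq1 : HasSum q 1) :
    MapsTo (genFun q) (Icc 0 1) (Icc 0 1) := fun _ ⟨hs0, hs1⟩ =>
  ⟨genFun_nonneg hq hs0, hq1.tsum_eq ▸ genFun_le_of_le_one hq hq1.summable hs0 hs1⟩

lemma one_sub_iterate_genFun_le (hq : ∀ k, 0 ≤ q k) (hq1 : HasSum q 1)
    (hm : HasSum (fun k : ℕ => (k : ℝ) * q k) m) {s : ℝ} (hs : s ∈ Icc 0 1) (n : ℕ) :
    1 - (genFun q)^[n] s ≤ m ^ n * (1 - s) := by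
  induction n with
  | zero => simp
  | succ n ih =>
    obtain ⟨ht0, ht1⟩ := (mapsTo_genFun_Icc hq hq1).iterate n hs
    have hm0 : 0 ≤ m := hm.nonneg fun k => mul_nonneg k.cast_nonneg (hq k)
    calc 1 - (genFun q)^[n + 1] s ≤ m * (1 - (genFun q)^[n] s) := by
          rw [Function.iterate_succ_apply']
          exact one_sub_genFun_le hq hq1 hm ht0 ht1
      _ ≤ m * (m ^ n * (1 - s)) := mul_le_mul_of_nonneg_left ih hm0
      _ = m ^ (n + 1) * (1 - s) := by ring

lemma tendsto_iterate_genFun_one (hq : ∀ k, 0 ≤ q k) (hq1 : HasSum q 1)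
    (hm : HasSum (fun k : ℕ => (k : ℝ) * q k) m) (hm1 : m < 1) {s : ℝ} (hs : s ∈ Icc 0 1) :
    Tendsto (fun n => (genFun q)^[n] s) atTop (𝓝 1) := by
  have hm0 : 0 ≤ m := hm.nonneg fun k => mul_nonneg k.cast_nonneg (hq k)
  have hlow : Tendsto (fun n => 1 - m ^ n * (1 - s)) atTop (𝓝 1) := by
    simpa using ((tendsto_pow_atTop_nhds_zero_of_lt_one hm0 hm1).mul_const (1 - s)).const_sub 1
  refine tendsto_of_tendsto_of_tendsto_of_le_of_le hlow tendsto_const_nhds (fun n => ?_)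
    fun n => ((mapsTo_genFun_Icc hq hq1).iterate n hs).2
  linarith [one_sub_iterate_genFun_le hq hq1 hm hs n]

end Offspring

namespace IsInvMeasure

variable {q : ℕ → ℝ} {lam : ℝ} {ν : ℕ → ℝ}

/-- Since `q₀ⁱ q_j ≤ q₀ P₀(i, j)`, the weights `ν i q₀ⁱ` are dominated by the invariance series
at `j`. -/
lemma summable_mul_pow_apply_zero (hν : IsInvMeasure q lam ν) (hq : ∀ k, 0 ≤ q k) {j : ℕ}
    (hj : 1 ≤ j) (hqj : 0 < q j) : Summable fun i => ν i * q 0 ^ i := by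
  refine (summable_mul_right_iff hqj.ne').mp <| ((hν.2.2 j hj).1.mul_right (q 0)).of_nonneg_of_le
    (fun i => mul_nonneg (mul_nonneg (hν.1 i) (pow_nonneg (hq 0) i)) (hq j)) ?_
  rintro (_ | i)
  · simp [hν.2.1]
  · calc ν (i + 1) * q 0 ^ (i + 1) * q j = ν (i + 1) * (q 0 ^ i * q j) * q 0 := by ring
      _ ≤ ν (i + 1) * convPow q (i + 1) j * q 0 := by
        gcongr
        exacts [hq 0, hν.1 _, pow_mul_le_convPow_succ hq i j]

lemma hasSum_mul_genFun_pow (hν : IsInvMeasure q lam ν) (hq : ∀ k, 0 ≤ q k) (hqs : Summable q)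
    {s : ℝ} (hs0 : 0 ≤ s) (hs1 : s ≤ 1) (hVs : Summable fun i => ν i * s ^ i)
    (hV0 : Summable fun i => ν i * q 0 ^ i) :
    HasSum (fun i => ν i * genFun q s ^ i) (lam * genFun ν s + genFun ν (q 0)) := by
  obtain ⟨hν0, hν00, hinv⟩ := hν
  have hrow : ∀ i, HasSum (fun j => ν i * (convPow q i (j + 1) * s ^ (j + 1)))
      (ν i * (genFun q s ^ i - q 0 ^ i)) := fun i => by
    have := (hasSum_nat_add_iff' 1).mpr
      (hasSum_convPow_mul_pow hq hs0 (summable_mul_pow_of_le_one hq hqs hs0 hs1) i)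
    simpa [convPow_apply_zero] using this.mul_left (ν i)
  have hcol : ∀ j : ℕ, HasSum (fun i => ν i * (convPow q i (j + 1) * s ^ (j + 1)))
      (lam * (ν (j + 1) * s ^ (j + 1))) := fun j => by
    obtain ⟨hsum, htsum⟩ := hinv (j + 1) j.succ_pos
    simpa [← mul_assoc, htsum] using (hsum.hasSum.mul_right (s ^ (j + 1)))
  have hcolSum : HasSum (fun j : ℕ => lam * (ν (j + 1) * s ^ (j + 1))) (lam * genFun ν s) := by
    have := (hasSum_nat_add_iff' 1).mpr hVs.hasSum
    simpa [hν00, genFun] using this.mul_left lam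
  have hdiff := hasSum_of_hasSum_colSums_of_nonneg
    (fun i j => mul_nonneg (hν0 i) (mul_nonneg (convPow_nonneg hq _ _) (pow_nonneg hs0 _)))
    hrow hcol hcolSum
  simpa [mul_sub, genFun] using hdiff.add hV0.hasSum

lemma lt_one_of_summable (hν : IsInvMeasure q lam ν) (hq : ∀ k, 0 ≤ q k) (hq1 : HasSum q 1)
    (hq0 : 0 < q 0) (hV0 : Summable fun i => ν i * q 0 ^ i) (hnt : ∃ j, 0 < ν j)
    (hsum : Summable ν) : lam < 1 := by
  obtain ⟨j, hj⟩ := hnt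
  have heq := (hν.hasSum_mul_genFun_pow hq hq1.summable zero_le_one le_rfl (by simpa using hsum)
    hV0).tsum_eq
  simp only [genFun_one, hq1.tsum_eq, one_pow, mul_one] at heq
  have hV0pos : 0 < genFun ν (q 0) :=
    (mul_pos hj (pow_pos hq0 j)).trans_le
      (hV0.le_tsum j fun i _ => mul_nonneg (hν.1 i) (pow_nonneg hq0.le i))
  have htot : 0 < ∑' i, ν i := hj.trans_le (hsum.le_tsum j fun i _ => hν.1 i)
  nlinarith

lemma summable_of_lt_one (hν : IsInvMeasure q lam ν) (hq : ∀ k, 0 ≤ q k) (hq1 : HasSum q 1)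
    {m : ℝ} (hm : HasSum (fun k : ℕ => (k : ℝ) * q k) m) (hm1 : m < 1) (hlam : 0 < lam)
    (hV0 : Summable fun i => ν i * q 0 ^ i) (hlt : lam < 1) : Summable ν := by
  set t : ℕ → ℝ := fun n => (genFun q)^[n] (q 0)
  set B := genFun ν (q 0) / (1 - lam)
  have hq0 : q 0 ∈ Icc 0 1 := ⟨hq 0, hq1.tsum_eq ▸ hq1.summable.le_tsum 0 fun k _ => hq k⟩
  have ht : ∀ n, t n ∈ Icc 0 1 := fun n => (mapsTo_genFun_Icc hq hq1).iterate n hq0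
  have hBeq : lam * B + genFun ν (q 0) = B := by
    linarith [mul_div_cancel₀ (genFun ν (q 0)) (by linarith : (1 : ℝ) - lam ≠ 0)]
  have hB0 : 0 ≤ B := div_nonneg (genFun_nonneg hν.1 (hq 0)) (by linarith)
  have hbound : ∀ n, Summable (fun i => ν i * t n ^ i) ∧ genFun ν (t n) ≤ B := by
    intro n
    induction n with
    | zero => exact ⟨hV0, show genFun ν (q 0) ≤ B by linarith [mul_nonneg hlam.le hB0]⟩
    | succ n ih =>
      have hF := hν.hasSum_mul_genFun_pow hq hq1.summable (ht n).1 (ht n).2 ih.1 hV0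
      simp only [t, Function.iterate_succ_apply']
      exact ⟨hF.summable, hF.tsum_eq.trans_le (by nlinarith [ih.2])⟩
  refine summable_of_sum_range_le (c := B) hν.1 fun N => ?_
  refine le_of_tendsto' (x := atTop) (f := fun n => ∑ i ∈ Finset.range N, ν i * t n ^ i) ?_ fun n => ?_
  · simpa using tendsto_finsetSum _ fun i _ =>
      ((tendsto_iterate_genFun_one hq hq1 hm hm1 hq0).pow i).const_mul (ν i)
  · exact ((hbound n).1.sum_le_tsum _ fun i _ =>
      mul_nonneg (hν.1 i) (pow_nonneg (ht n).1 i)).trans (hbound n).2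

end IsInvMeasure

theorem invariant_measure_finite_iff_eigenvalue_lt_one
    (q : ℕ → ℝ) (hq0 : ∀ k, 0 ≤ q k) (hq1 : HasSum q 1)
    (m : ℝ) (hm : HasSum (fun k : ℕ => (k : ℝ) * q k) m) (hm0 : 0 < m) (hm1 : m < 1)
    (lam : ℝ) (hlam : 0 < lam)
    (ν : ℕ → ℝ) (hν : IsInvMeasure q lam ν) (hnt : ∃ j, 0 < ν j) :
    Summable ν ↔ lam < 1 := by
  have hq00 : 0 < q 0 := zero_lt_apply_zero_of_mean_lt_one hq0 hq1 hm hm1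
  obtain ⟨j, hj, hqj⟩ := exists_pos_of_mean_pos hm hm0
  have hV0 := hν.summable_mul_pow_apply_zero hq0 hj hqj
  exact ⟨hν.lt_one_of_summable hq0 hq1 hq00 hV0 hnt,
    hν.summable_of_lt_one hq0 hq1 hm hm1 hlam hV0⟩
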